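/- arXiv:1902.08272 — 2 statements merged into one kernel-verified Lean document; each statement's English description precedes it below -/
import Mathlib

section
/- The language K over the alphabet {0,1,#} is recognised by some total parsing expression grammar; that is, K ∈ PEG. -/
/-! ## Parsing expression grammars -/

/-- Parsing expressions over terminal alphabet `α` and non-terminal alphabet `ν`. -/
inductive PExp (α : Type) (ν : Type) : Type where
  | eps : PExp α ν
  | fail : PExp α ν
  | term (a : α) : PExp α ν
  | nt (A : ν) : PExp α ν
  | notP (e : PExp α ν) : PExp α ν
  | andP (e : PExp α ν) : PExp α ν
  | seq (e₁ e₂ : PExp α ν) : PExp α ν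
  | choice (e₁ e₂ : PExp α ν) : PExp α ν

/-- Big-step semantics of the recognition map `Rec` of a PEG with rules `R`:
`PegRec R e x r` holds iff `Rec(e,x)` is defined and equals `r`, where
`r = none` codes `FAIL` and `r = some y` codes the consumed prefix `y` of `x`. -/
inductive PegRec {α ν : Type} (R : ν → PExp α ν) :
    PExp α ν → List α → Option (List α) → Prop where
  | eps (x : List α) : PegRec R .eps x (some [])
  | fail (x : List α) : PegRec R .fail x none
  | termOk (a : α) (z : List α) : PegRec R (.term a) (a :: z) (some [a])
  | termMismatch (a b : α) (z : List α) (h : a ≠ b) : PegRec R (.term a) (b :: z) none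
  | termNil (a : α) : PegRec R (.term a) [] none
  | notFail (e : PExp α ν) (x : List α) :
      PegRec R e x none → PegRec R (.notP e) x (some [])
  | notSucc (e : PExp α ν) (x y : List α) :
      PegRec R e x (some y) → PegRec R (.notP e) x none
  | andSucc (e : PExp α ν) (x y : List α) :
      PegRec R e x (some y) → PegRec R (.andP e) x (some [])
  | andFail (e : PExp α ν) (x : List α) :
      PegRec R e x none → PegRec R (.andP e) x none
  | seqOk (e₁ e₂ : PExp α ν) (y₁ z y₂ : List α) :
      PegRec R e₁ (y₁ ++ z) (some y₁) → PegRec R e₂ z (some y₂) →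
      PegRec R (.seq e₁ e₂) (y₁ ++ z) (some (y₁ ++ y₂))
  | seqFail₁ (e₁ e₂ : PExp α ν) (x : List α) :
      PegRec R e₁ x none → PegRec R (.seq e₁ e₂) x none
  | seqFail₂ (e₁ e₂ : PExp α ν) (y₁ z : List α) :
      PegRec R e₁ (y₁ ++ z) (some y₁) → PegRec R e₂ z none →
      PegRec R (.seq e₁ e₂) (y₁ ++ z) none
  | choice₁ (e₁ e₂ : PExp α ν) (x y : List α) :
      PegRec R e₁ x (some y) → PegRec R (.choice e₁ e₂) x (some y)
  | choice₂ (e₁ e₂ : PExp α ν) (x : List α) (r : Option (List α)) :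
      PegRec R e₁ x none → PegRec R e₂ x r → PegRec R (.choice e₁ e₂) x r
  | ntRule (A : ν) (x : List α) (r : Option (List α)) :
      PegRec R (R A) x r → PegRec R (.nt A) x r

/-- A parsing expression grammar over the (finite) terminal alphabet `α`:
a finite alphabet `ν` of non-terminals, a rule for each non-terminal,
and a starting non-terminal. -/
structure PEG (α : Type) : Type 1 where
  ν : Type
  finNT : Finite ν
  R : ν → PExp α ν
  S : ν

/-- A PEG is total if its recognition map is total (defined on every expression and input). -/
def PEG.Total {α : Type} (G : PEG α) : Prop :=
  ∀ (e : PExp α G.ν) (x : List α), ∃ r, PegRec G.R e x r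

/-- The language recognised by a PEG: strings on which the starting
non-terminal succeeds and consumes the whole input. -/
def PEG.Lang {α : Type} (G : PEG α) : Set (List α) :=
  { x | PegRec G.R (.nt G.S) x (some x) }

/-- A language is in the class `PEG` iff some total parsing expression grammar recognises it. -/
def IsPEGLang {α : Type} (L : Set (List α)) : Prop :=
  ∃ G : PEG α, G.Total ∧ G.Lang = L

/-- The three-symbol alphabet `{0, 1, #}`. -/
inductive HSym : Type where
  | b0 : HSym
  | b1 : HSym
  | hash : HSym
  deriving DecidableEq

instance : Fintype HSym :=
  ⟨{HSym.b0, HSym.b1, HSym.hash}, by intro x; cases x <;> simp⟩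

/-- A string over `{0,1,#}` is *binary* if it contains no `#`. -/
def HSym.IsBin (w : List HSym) : Prop := HSym.hash ∉ w

/-- The language `K = { w₁#w₂#⋯#w_N#x : N ≥ 1, w₁,…,w_N,x ∈ {0,1}*, ∃ i, xʳ = wᵢ }`
over the alphabet `{0,1,#}`. -/
def LangK : Set (List HSym) :=
  { s | ∃ (ws : List (List HSym)) (x : List HSym),
      ws ≠ [] ∧ (∀ w ∈ ws, HSym.IsBin w) ∧ HSym.IsBin x ∧
      s = (ws.map (fun w => w ++ [HSym.hash])).flatten ++ x ∧
      x.reverse ∈ ws }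

/-! The grammar, in the usual notation:

    S ← A !. / B # S        A ← 0 A 0 / 1 A 1 / # M
    M ← B # M / ε           B ← [01] B / ε

Write the input as `w₁#⋯#w_N#x` with every `wᵢ` and `x` binary. `B` eats a maximal binary
word and `M` all the remaining `#`-terminated blocks, so `A`, started at block `wᵢ`, matches
`wᵢ#wᵢ₊₁#⋯#w_N#wᵢʳ` exactly when `wᵢʳ` is a prefix of `x`, and `A !.` succeeds exactly when
`x = wᵢʳ`. `S` tries `A !.` at each block in turn, skipping the block with `B #` when it fails.
This pins down the result of every non-terminal on every input, which gives totality as well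
as the language. -/

namespace PegRec

variable {α ν : Type} {R : ν → PExp α ν}

theorem isPrefix {e : PExp α ν} {x : List α} {r : Option (List α)}
    (h : PegRec R e x r) : ∀ y ∈ r, y <+: x := by
  induction h <;> simp_all

theorem unique {e : PExp α ν} {x : List α} {r₁ r₂ : Option (List α)}
    (h₁ : PegRec R e x r₁) (h₂ : PegRec R e x r₂) : r₁ = r₂ := by
  induction h₁ generalizing r₂ with
  | seqOk _ _ y₁ z _ _ _ ih₁ ih₂ | seqFail₂ _ _ y₁ z _ _ ih₁ ih₂ =>
    generalize hx : y₁ ++ z = x at h₂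
    cases h₂ with
    | seqFail₁ _ _ _ h => cases ih₁ (hx ▸ h)
    | seqOk _ _ _ _ _ h h' | seqFail₂ _ _ _ _ h h' =>
      obtain rfl := Option.some.inj (ih₁ (hx ▸ h))
      obtain rfl := List.append_cancel_left hx
      grind
  | _ => cases h₂ <;> grind

theorem seq_map {e₁ e₂ : PExp α ν} {y₁ z : List α} {r : Option (List α)}
    (h₁ : PegRec R e₁ (y₁ ++ z) (some y₁)) (h₂ : PegRec R e₂ z r) :
    PegRec R (.seq e₁ e₂) (y₁ ++ z) (r.map (y₁ ++ ·)) := by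
  cases r with
  | none => exact .seqFail₂ _ _ _ _ h₁ h₂
  | some y₂ => exact .seqOk _ _ _ _ _ h₁ h₂

theorem choice_or {e₁ e₂ : PExp α ν} {x : List α} {r₁ r₂ : Option (List α)}
    (h₁ : PegRec R e₁ x r₁) (h₂ : PegRec R e₂ x r₂) :
    PegRec R (.choice e₁ e₂) x (r₁.or r₂) := by
  cases r₁ with
  | none => exact .choice₂ _ _ _ _ h₁ h₂
  | some y₁ => exact .choice₁ _ _ _ _ h₁

theorem term_of_head?_ne {a : α} {x : List α} (h : x.head? ≠ some a) :
    PegRec R (.term a) x none := by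
  cases x with
  | nil => exact .termNil a
  | cons b z => exact .termMismatch a b z (by simpa [eq_comm] using h)

theorem total_of_nt (h : ∀ A x, ∃ r, PegRec R (.nt A) x r) :
    ∀ e x, ∃ r, PegRec R e x r := by
  intro e
  induction e with
  | eps => exact fun x => ⟨_, .eps x⟩
  | fail => exact fun x => ⟨_, .fail x⟩
  | term a =>
    rintro (_ | ⟨b, z⟩)
    · exact ⟨_, .termNil a⟩
    · by_cases hab : a = b
      · exact hab ▸ ⟨_, .termOk a z⟩
      · exact ⟨_, .termMismatch a b z hab⟩
  | nt A => exact h A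
  | notP e ih =>
    intro x
    obtain ⟨_ | y, h⟩ := ih x
    exacts [⟨_, .notFail _ _ h⟩, ⟨_, .notSucc _ _ _ h⟩]
  | andP e ih =>
    intro x
    obtain ⟨_ | y, h⟩ := ih x
    exacts [⟨_, .andFail _ _ h⟩, ⟨_, .andSucc _ _ _ h⟩]
  | seq e₁ e₂ ih₁ ih₂ =>
    intro x
    obtain ⟨_ | y, h₁⟩ := ih₁ x
    · exact ⟨_, .seqFail₁ _ _ _ h₁⟩
    · obtain ⟨z, rfl⟩ := h₁.isPrefix y rfl
      obtain ⟨r, h₂⟩ := ih₂ z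
      exact ⟨_, seq_map h₁ h₂⟩
  | choice e₁ e₂ ih₁ ih₂ =>
    intro x
    obtain ⟨r₁, h₁⟩ := ih₁ x
    obtain ⟨r₂, h₂⟩ := ih₂ x
    exact ⟨_, choice_or h₁ h₂⟩

end PegRec

namespace KPeg

open HSym

@[simp] theorem isBin_nil : IsBin [] := List.not_mem_nil

@[simp] theorem isBin_cons {c : HSym} {w : List HSym} :
    IsBin (c :: w) ↔ c ≠ hash ∧ IsBin w := by
  simp [IsBin, eq_comm]

def blocks (ws : List (List HSym)) : List HSym := (ws.map (· ++ [hash])).flatten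

@[simp] theorem blocks_nil : blocks [] = [] := rfl

@[simp] theorem blocks_cons (w : List HSym) (ws : List (List HSym)) :
    blocks (w :: ws) = w ++ hash :: blocks ws := by
  simp [blocks]

theorem exists_blocks_append (x : List HSym) :
    ∃ ws t, (∀ w ∈ ws, IsBin w) ∧ IsBin t ∧ x = blocks ws ++ t := by
  induction x with
  | nil => exact ⟨[], [], by simp, isBin_nil, rfl⟩
  | cons c x ih =>
    obtain ⟨ws, t, hws, ht, rfl⟩ := ih
    by_cases hc : c = hash
    · exact ⟨[] :: ws, t, by simpa using hws, ht, by simp [hc]⟩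
    cases ws with
    | nil => exact ⟨[], c :: t, by simp, by simp [hc, ht], rfl⟩
    | cons w ws =>
      rw [List.forall_mem_cons] at hws
      exact ⟨(c :: w) :: ws, t, by simpa [hc] using hws, ht, by simp⟩

inductive NT : Type
  | S | A | M | B
  deriving DecidableEq

instance : Fintype NT := ⟨{.S, .A, .M, .B}, fun X => by cases X <;> simp⟩

def binDigit : PExp HSym NT := .choice (.term b0) (.term b1)

def eoi : PExp HSym NT := .notP (.choice binDigit (.term hash))

def rules : NT → PExp HSym NT
  | .S => .choice (.seq (.nt .A) eoi) (.seq (.nt .B) (.seq (.term hash) (.nt .S)))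
  | .A => .choice (.seq (.term b0) (.seq (.nt .A) (.term b0)))
      (.choice (.seq (.term b1) (.seq (.nt .A) (.term b1))) (.seq (.term hash) (.nt .M)))
  | .M => .choice (.seq (.nt .B) (.seq (.term hash) (.nt .M))) .eps
  | .B => .choice (.seq binDigit (.nt .B)) .eps

theorem pegRec_binDigit_of_ne {c : HSym} (hc : c ≠ hash) (z : List HSym) :
    PegRec rules binDigit (c :: z) (some [c]) := by
  cases c with
  | b0 => exact .choice₁ _ _ _ _ (.termOk _ _)
  | b1 => exact .choice₂ _ _ _ _ (.termMismatch _ _ _ nofun) (.termOk _ _)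
  | hash => exact absurd rfl hc

theorem pegRec_binDigit_of_head? {z : List HSym} (hz : ∀ c ∈ z.head?, c = hash) :
    PegRec rules binDigit z none :=
  .choice₂ _ _ _ _ (.term_of_head?_ne fun h => nomatch hz _ h)
    (.term_of_head?_ne fun h => nomatch hz _ h)

theorem pegRec_eoi_nil : PegRec rules eoi [] (some []) :=
  .notFail _ _ (.choice₂ _ _ _ _ (pegRec_binDigit_of_head? (by simp)) (.termNil _))

theorem pegRec_eoi_cons (c : HSym) (z : List HSym) : PegRec rules eoi (c :: z) none := by
  by_cases hc : c = hash
  · subst hc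
    exact .notSucc _ _ _ (.choice₂ _ _ _ _ (pegRec_binDigit_of_head? (by simp)) (.termOk _ _))
  · exact .notSucc _ _ _ (.choice₁ _ _ _ _ (pegRec_binDigit_of_ne hc z))

theorem pegRec_B {w z : List HSym} (hw : IsBin w) (hz : ∀ c ∈ z.head?, c = hash) :
    PegRec rules (.nt .B) (w ++ z) (some w) := by
  induction w with
  | nil =>
    exact .ntRule _ _ _
      (.choice₂ _ _ _ _ (.seqFail₁ _ _ _ (pegRec_binDigit_of_head? hz)) (.eps _))
  | cons c w ih =>
    rw [isBin_cons] at hw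
    exact .ntRule _ _ _ (.choice₁ _ _ _ _
      (.seqOk _ _ [c] (w ++ z) w (pegRec_binDigit_of_ne hw.1 _) (ih hw.2)))

theorem pegRec_M {ws : List (List HSym)} {t : List HSym} (hws : ∀ w ∈ ws, IsBin w)
    (ht : IsBin t) : PegRec rules (.nt .M) (blocks ws ++ t) (some (blocks ws)) := by
  induction ws with
  | nil =>
    have hB : PegRec rules (.nt .B) (t ++ []) (some t) := pegRec_B ht (by simp)
    have h := PegRec.seqFail₂ _ _ _ _ hB (.seqFail₁ (.term hash) (.nt .M) _ (.termNil _))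
    exact .ntRule _ _ _ (.choice₂ _ _ _ _ (by simpa using h) (.eps _))
  | cons w ws ih =>
    rw [List.forall_mem_cons] at hws
    have hB : PegRec rules (.nt .B) (w ++ hash :: (blocks ws ++ t)) (some w) :=
      pegRec_B hws.1 (by simp)
    have h := PegRec.seqOk _ _ _ _ _ hB (.seqOk _ _ [hash] _ _ (.termOk _ _) (ih hws.2))
    exact .ntRule _ _ _ (.choice₁ _ _ _ _ (by simpa using h))

theorem pegRec_A_cons {c : HSym} (hc : c ≠ hash) {u : List HSym} {r : Option (List HSym)}
    (h : PegRec rules (.seq (.nt .A) (.term c)) u r) :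
    PegRec rules (.nt .A) (c :: u) (r.map (c :: ·)) := by
  have mismatch (a : HSym) (e : PExp HSym NT) (ha : a ≠ c) :
      PegRec rules (.seq (.term a) e) (c :: u) none :=
    .seqFail₁ _ _ _ (.termMismatch _ _ _ ha)
  have first := PegRec.seq_map (y₁ := [c]) (.termOk c u) h
  refine .ntRule _ _ _ ?_
  cases c with
  | b0 =>
    simpa [rules] using first.choice_or ((mismatch b1 _ nofun).choice_or (mismatch hash _ nofun))
  | b1 =>
    simpa [rules] using (mismatch b0 _ nofun).choice_or (first.choice_or (mismatch hash _ nofun))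
  | hash => exact absurd rfl hc

theorem pegRec_A_of_isBin {u : List HSym} (hu : IsBin u) : PegRec rules (.nt .A) u none := by
  induction u with
  | nil =>
    exact .ntRule _ _ _ (.choice₂ _ _ _ _ (.seqFail₁ _ _ _ (.termNil _))
      (.choice₂ _ _ _ _ (.seqFail₁ _ _ _ (.termNil _)) (.seqFail₁ _ _ _ (.termNil _))))
  | cons c u ih =>
    rw [isBin_cons] at hu
    exact pegRec_A_cons hu.1 (.seqFail₁ _ _ _ (ih hu.2))

theorem pegRec_A_some {w z : List HSym} {ws : List (List HSym)} (hw : IsBin w)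
    (hws : ∀ v ∈ ws, IsBin v) (hz : IsBin (w.reverse ++ z)) :
    PegRec rules (.nt .A) (w ++ hash :: (blocks ws ++ (w.reverse ++ z)))
      (some (w ++ hash :: (blocks ws ++ w.reverse))) := by
  induction w generalizing z with
  | nil =>
    have h := PegRec.seqOk _ _ [hash] _ _ (.termOk _ _) (pegRec_M hws (by simpa using hz))
    exact .ntRule _ _ _ (.choice₂ _ _ _ _ (.seqFail₁ _ _ _ (.termMismatch _ _ _ nofun))
      (.choice₂ _ _ _ _ (.seqFail₁ _ _ _ (.termMismatch _ _ _ nofun)) (by simpa using h)))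
  | cons c w ih =>
    rw [isBin_cons] at hw
    have hA := ih (z := c :: z) hw.2 (by simp_all)
    have h := pegRec_A_cons hw.1 (.seqOk _ _ (w ++ hash :: (blocks ws ++ w.reverse)) (c :: z) [c]
      (by simpa using hA) (.termOk c z))
    simpa using h

theorem pegRec_A_of_not_prefix {w t : List HSym} {ws : List (List HSym)} (hw : IsBin w)
    (hws : ∀ v ∈ ws, IsBin v) (ht : IsBin t) (h : ¬ w.reverse <+: t) :
    PegRec rules (.nt .A) (w ++ hash :: (blocks ws ++ t)) none := by
  induction w with
  | nil => exact absurd List.nil_prefix h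
  | cons c w ih =>
    rw [isBin_cons] at hw
    suffices h' : PegRec rules (.seq (.nt .A) (.term c)) (w ++ hash :: (blocks ws ++ t)) none from
      pegRec_A_cons hw.1 h'
    by_cases hp : w.reverse <+: t
    · obtain ⟨z, rfl⟩ := hp
      have hA := pegRec_A_some hw.2 hws ht
      have hc : z.head? ≠ some c := by
        rw [Ne, List.head?_eq_some_iff]
        rintro ⟨z, rfl⟩
        exact h (by simp)
      simpa using PegRec.seqFail₂ _ _ (w ++ hash :: (blocks ws ++ w.reverse)) z
        (by simpa using hA) (PegRec.term_of_head?_ne hc)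
    · exact .seqFail₁ _ _ _ (ih hw.2 hp)

theorem pegRec_A_eoi {w t : List HSym} {ws : List (List HSym)} (hw : IsBin w)
    (hws : ∀ v ∈ ws, IsBin v) (ht : IsBin t) :
    PegRec rules (.seq (.nt .A) eoi) (w ++ hash :: (blocks ws ++ t))
      (if t = w.reverse then some (w ++ hash :: (blocks ws ++ t)) else none) := by
  by_cases hp : w.reverse <+: t
  · obtain ⟨z, rfl⟩ := hp
    have hA := pegRec_A_some hw hws ht
    rw [← List.append_assoc, ← List.cons_append, ← List.append_assoc] at hA
    cases z with
    | nil => simpa using hA.seq_map pegRec_eoi_nil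
    | cons c z => simpa using hA.seq_map (pegRec_eoi_cons c z)
  · rw [if_neg (fun h => hp (by simp [h]))]
    exact .seqFail₁ _ _ _ (pegRec_A_of_not_prefix hw hws ht hp)

theorem pegRec_S {ws : List (List HSym)} {t : List HSym} (hws : ∀ w ∈ ws, IsBin w)
    (ht : IsBin t) :
    PegRec rules (.nt .S) (blocks ws ++ t)
      (if t.reverse ∈ ws then some (blocks ws ++ t) else none) := by
  induction ws with
  | nil =>
    have hB : PegRec rules (.nt .B) (t ++ []) (some t) := pegRec_B ht (by simp)
    have h := PegRec.seqFail₂ _ _ _ _ hB (.seqFail₁ (.term hash) (.nt .S) _ (.termNil _))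
    exact .ntRule _ _ _ (.choice₂ _ _ _ _ (.seqFail₁ _ _ _ (pegRec_A_of_isBin ht))
      (by simpa using h))
  | cons w ws ih =>
    rw [List.forall_mem_cons] at hws
    have hB : PegRec rules (.nt .B) (w ++ hash :: (blocks ws ++ t)) (some w) :=
      pegRec_B hws.1 (by simp)
    have h := (pegRec_A_eoi hws.1 hws.2 ht).choice_or
      (hB.seq_map (PegRec.seq_map (y₁ := [hash]) (.termOk hash _) (ih hws.2)))
    convert PegRec.ntRule NT.S _ _ h using 1
    · simp
    · simp only [List.mem_cons, List.reverse_eq_iff]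
      split_ifs <;> simp_all

theorem exists_pegRec_nt (X : NT) (x : List HSym) : ∃ r, PegRec rules (.nt X) x r := by
  obtain ⟨ws, t, hws, ht, rfl⟩ := exists_blocks_append x
  cases X with
  | S => exact ⟨_, pegRec_S hws ht⟩
  | M => exact ⟨_, pegRec_M hws ht⟩
  | A =>
    cases ws with
    | nil => exact ⟨_, pegRec_A_of_isBin ht⟩
    | cons w ws =>
      rw [List.forall_mem_cons] at hws
      by_cases hp : w.reverse <+: t
      · obtain ⟨z, rfl⟩ := hp
        exact ⟨_, by simpa using pegRec_A_some hws.1 hws.2 ht⟩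
      · exact ⟨_, by simpa using pegRec_A_of_not_prefix hws.1 hws.2 ht hp⟩
  | B =>
    cases ws with
    | nil => exact ⟨_, by simpa using pegRec_B (z := []) ht (by simp)⟩
    | cons w ws =>
      rw [List.forall_mem_cons] at hws
      exact ⟨_, by simpa using pegRec_B (z := hash :: (blocks ws ++ t)) hws.1 (by simp)⟩

theorem pegRec_S_self_iff (s : List HSym) : PegRec rules (.nt .S) s (some s) ↔ s ∈ LangK := by
  constructor
  · intro hs
    obtain ⟨ws, t, hws, ht, rfl⟩ := exists_blocks_append s
    have h := hs.unique (pegRec_S hws ht)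
    split_ifs at h with hmem
    exact ⟨ws, t, List.ne_nil_of_mem hmem, hws, ht, rfl, hmem⟩
  · rintro ⟨ws, t, -, hws, ht, rfl, hmem⟩
    have h := pegRec_S hws ht
    rw [if_pos hmem] at h
    exact h

end KPeg

/-- The language `K` over `{0,1,#}` is recognised by some
total parsing expression grammar. -/
theorem K_isPEG : IsPEGLang LangK :=
  ⟨⟨KPeg.NT, inferInstance, KPeg.rules, .S⟩, PegRec.total_of_nt KPeg.exists_pegRec_nt,
    Set.ext KPeg.pegRec_S_self_iff⟩
end

section
/- For every function t : ℕ → ℕ with t(n) = o(n/(log n)²), the language K over the alphabet {0,1,#} does not belong to Online(t(n)). -/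
/-!
An online machine that has read a prefix `y` of length `ℓ` and must answer after `m` more
symbols halts within `T = (m + 1)(t(ℓ + m) + 1)` steps, so from then on it only sees its state
and the cells at distance at most `T` from its work heads. Hence there are at most
`|Q| · |Γ|^(k(2T + 1))` classes of `(L, ℓ, m)`-equivalence, `k` being the number of work
tapes. For `K` and `ℓ = 2^m (m + 1)`, the prefixes listing each nonzero `v ∈ {0,1}^m` or `0^m`
in its place realize `2^(2^m - 1)` classes, told apart by the suffixes `vʳ`. At `n ≈ m 2^m`
the hypothesis `t(n) = o(n / (log n)²)` gives `T = o(2^m)`, so the first bound is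
`2^(o(2^m))`: a contradiction.
-/

/-! ## Online Turing machines and the equivalence-class counting method -/

/-- A head move of a Turing machine. -/
inductive TMMove : Type where
  | left : TMMove
  | stay : TMMove
  | right : TMMove

/-- The displacement of a head move. -/
def TMMove.offset : TMMove → ℤ
  | .left => -1
  | .stay => 0
  | .right => 1

/-- The shortest (most-significant-bit-first) binary representation of a
natural number, as a list of booleans; by convention `0` is represented by `"0"`. -/
def natBinRep (n : ℕ) : List Bool :=
  if n = 0 then [false] else (Nat.bits n).reverse

/-- An online (multi-tape) Turing machine with input alphabet `σ`: it has
`tapes + 1` work tapes (tape `0` being the auxiliary tape that initially holds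
the input length in binary), and a one-way read-only input tape.  At each step
the transition function sees the current state, the input symbol under the
input head (`none` when past the end of the input) and the symbols under the
work-tape heads, and produces a new state, a flag telling whether to advance
the input head (thereby reading a new input symbol), and a write/move action
for each work tape. -/
structure OnlineTM (σ : Type) : Type 1 where
  Q : Type
  finQ : Finite Q
  Γ : Type
  finΓ : Finite Γ
  blank : Γ
  sym0 : Γ
  sym1 : Γ
  tapes : ℕ
  q0 : Q
  Halt : Set Q
  F : Set Q
  δ : Q → Option σ → (Fin (tapes + 1) → Γ) →
        Q × Bool × (Fin (tapes + 1) → Γ × TMMove)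

/-- A configuration of an online Turing machine. -/
structure OCfg {σ : Type} (M : OnlineTM σ) : Type where
  q : M.Q
  ipos : ℕ
  hd : Fin (M.tapes + 1) → ℤ
  tape : Fin (M.tapes + 1) → ℤ → M.Γ

/-- The initial configuration on an input of length `n`: initial state, input
head at the start, work tapes blank except the auxiliary tape `0`, which holds
the binary representation of `n` in cells `0, …`. -/
def OnlineTM.initCfg {σ : Type} (M : OnlineTM σ) (n : ℕ) : OCfg M :=
  { q := M.q0
    ipos := 0
    hd := fun _ => 0
    tape := fun i p =>
      if i = 0 ∧ 0 ≤ p ∧ p < (natBinRep n).length then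
        (if (natBinRep n).getD p.toNat false then M.sym1 else M.sym0)
      else M.blank }

open scoped Classical in
/-- A single computation step of an online Turing machine on input `x`
(halting states are absorbing). -/
noncomputable def OnlineTM.stepCfg {σ : Type} (M : OnlineTM σ) (x : List σ)
    (c : OCfg M) : OCfg M :=
  if c.q ∈ M.Halt then c
  else
    let t := M.δ c.q x[c.ipos]? (fun i => c.tape i (c.hd i))
    { q := t.1
      ipos := if t.2.1 then c.ipos + 1 else c.ipos
      hd := fun i => c.hd i + (t.2.2 i).2.offset
      tape := fun i p => if p = c.hd i then (t.2.2 i).1 else c.tape i p }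

/-- The configuration of `M` on input `x` after `i` steps. -/
noncomputable def OnlineTM.runCfg {σ : Type} (M : OnlineTM σ) (x : List σ)
    (i : ℕ) : OCfg M :=
  (M.stepCfg x)^[i] (M.initCfg x.length)

/-- `M` decides `L` doing at most `t(n)` steps of computation per input symbol:
on every input `x` of length `n`, the machine halts after having read the whole
input, it accepts iff `x ∈ L`, and during the computation the input head never
stays put for more than `t(n)` consecutive steps (i.e. at most `t(n)` steps are
performed between consecutive readings of input symbols, before the first
reading and after the last one). -/
def OnlineTM.DecidesIn {σ : Type} (M : OnlineTM σ) (L : Set (List σ))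
    (t : ℕ → ℕ) : Prop :=
  ∀ x : List σ, ∃ N : ℕ,
    (M.runCfg x N).q ∈ M.Halt ∧
    (∀ i < N, (M.runCfg x i).q ∉ M.Halt) ∧
    (M.runCfg x N).ipos = x.length ∧
    ((M.runCfg x N).q ∈ M.F ↔ x ∈ L) ∧
    (∀ i j : ℕ, i ≤ j → j ≤ N →
      (M.runCfg x i).ipos = (M.runCfg x j).ipos → j - i ≤ t x.length)

/-- The class `Online(t(n))` of languages over `σ` decidable by an online
Turing machine doing at most `t(n)` steps of computation per input symbol. -/
def OnlineClass (σ : Type) (t : ℕ → ℕ) : Set (Set (List σ)) :=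
  { L | ∃ M : OnlineTM σ, M.DecidesIn L t }

/-- `(L,ℓ,m)`-equivalence (the parameter `ℓ` is implicit in the domain):
`y₁ ≡ y₂` iff appending any string of length `m` leads to the same
membership in `L`. -/
def LEquiv {σ : Type} (L : Set (List σ)) (m : ℕ) (y₁ y₂ : List σ) : Prop :=
  ∀ x : List σ, x.length = m → (y₁ ++ x ∈ L ↔ y₂ ++ x ∈ L)

/-- `E_L(ℓ,m)`: the number of equivalence classes of strings of length `ℓ`
under `(L,ℓ,m)`-equivalence. -/
noncomputable def numClasses {σ : Type} (L : Set (List σ)) (ℓ m : ℕ) : ℕ :=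
  Nat.card (Quot (fun y₁ y₂ : { y : List σ // y.length = ℓ } =>
    LEquiv L m y₁.1 y₂.1))

/-- `t(n) ∈ o(n/(log n)²)`, i.e. `t(n)·(log n)²/n → 0` as `n → ∞`. -/
def LittleOOfNOverLogSq (t : ℕ → ℕ) : Prop :=
  Filter.Tendsto (fun n : ℕ => (t n : ℝ) * (Real.log n) ^ 2 / n)
    Filter.atTop (nhds 0)

namespace OnlineTM

variable {σ : Type} {M : OnlineTM σ}

section Dynamics

variable (M) (z : List σ)

theorem stepCfg_of_mem_halt {c : OCfg M} (h : c.q ∈ M.Halt) : M.stepCfg z c = c :=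
  if_pos h

theorem ipos_le_ipos_stepCfg (c : OCfg M) : c.ipos ≤ (M.stepCfg z c).ipos := by
  unfold stepCfg
  split_ifs
  · rfl
  · dsimp only
    split_ifs <;> omega

theorem ipos_stepCfg_le_succ (c : OCfg M) : (M.stepCfg z c).ipos ≤ c.ipos + 1 := by
  unfold stepCfg
  split_ifs
  · omega
  · dsimp only
    split_ifs <;> omega

theorem runCfg_succ (i : ℕ) : M.runCfg z (i + 1) = M.stepCfg z (M.runCfg z i) :=
  Function.iterate_succ_apply' _ _ _

theorem runCfg_add (a s : ℕ) : M.runCfg z (a + s) = (M.stepCfg z)^[s] (M.runCfg z a) := by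
  rw [runCfg, runCfg, add_comm, Function.iterate_add_apply]

theorem runCfg_eq_of_mem_halt {N k : ℕ} (h : (M.runCfg z N).q ∈ M.Halt) (hk : N ≤ k) :
    M.runCfg z k = M.runCfg z N := by
  obtain ⟨s, rfl⟩ := Nat.exists_eq_add_of_le hk
  rw [runCfg_add]
  exact Function.iterate_fixed (M.stepCfg_of_mem_halt z h) s

theorem monotone_ipos_runCfg : Monotone fun i => (M.runCfg z i).ipos :=
  monotone_nat_of_le_succ fun i => by
    rw [runCfg_succ]
    exact M.ipos_le_ipos_stepCfg z _

theorem exists_first_runCfg_ipos_eq {ℓ N : ℕ} (h : ℓ ≤ (M.runCfg z N).ipos) :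
    ∃ a, (M.runCfg z a).ipos = ℓ ∧ ∀ j < a, (M.runCfg z j).ipos < ℓ := by
  classical
  have hex : ∃ i, ℓ ≤ (M.runCfg z i).ipos := ⟨N, h⟩
  refine ⟨Nat.find hex, le_antisymm ?_ (Nat.find_spec hex),
    fun j hj => not_le.1 (Nat.find_min hex hj)⟩
  rcases hfind : Nat.find hex with _ | k
  · exact Nat.zero_le _
  · have hk : (M.runCfg z k).ipos < ℓ := not_le.1 (Nat.find_min hex (by omega))
    have := M.ipos_stepCfg_le_succ z (M.runCfg z k)
    rw [runCfg_succ]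
    omega

theorem runCfg_eq_of_ipos_lt {z₁ z₂ : List σ} {ℓ i : ℕ} (hlen : z₁.length = z₂.length)
    (hz : ∀ p < ℓ, z₁[p]? = z₂[p]?) (hi : ∀ j < i, (M.runCfg z₁ j).ipos < ℓ) :
    M.runCfg z₁ i = M.runCfg z₂ i := by
  induction i with
  | zero => exact congrArg M.initCfg hlen
  | succ i ih =>
    have ih := ih fun j hj => hi j (by omega)
    have hread := hz _ (ih ▸ hi i (by omega))
    rw [runCfg_succ, runCfg_succ, ih]
    unfold stepCfg
    rw [hread]

end Dynamics

end OnlineTM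

theorem TMMove.abs_offset_le (mv : TMMove) : |mv.offset| ≤ 1 := by
  cases mv <;> simp [TMMove.offset]

structure OCfg.AgreeWithin {σ : Type} {M : OnlineTM σ} (T : ℕ) (c₁ c₂ : OCfg M) : Prop where
  q_eq : c₁.q = c₂.q
  ipos_eq : c₁.ipos = c₂.ipos
  tape_eq : ∀ i (p : ℤ), |p| ≤ T → c₁.tape i (c₁.hd i + p) = c₂.tape i (c₂.hd i + p)

namespace OCfg.AgreeWithin

variable {σ : Type} {M : OnlineTM σ} {T : ℕ} {c₁ c₂ : OCfg M}

theorem mono (h : AgreeWithin T c₁ c₂) {S : ℕ} (hST : S ≤ T) : AgreeWithin S c₁ c₂ :=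
  ⟨h.q_eq, h.ipos_eq, fun i p hp => h.tape_eq i p (hp.trans (by exact_mod_cast hST))⟩

theorem stepCfg (h : AgreeWithin (T + 1) c₁ c₂) {z₁ z₂ : List σ}
    (hz : z₁[c₁.ipos]? = z₂[c₁.ipos]?) :
    AgreeWithin T (M.stepCfg z₁ c₁) (M.stepCfg z₂ c₂) := by
  by_cases hH : c₁.q ∈ M.Halt
  · rw [M.stepCfg_of_mem_halt z₁ hH, M.stepCfg_of_mem_halt z₂ (h.q_eq ▸ hH)]
    exact h.mono T.le_succ
  have hread : (fun i => c₁.tape i (c₁.hd i)) = fun i => c₂.tape i (c₂.hd i) :=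
    funext fun i => by simpa using h.tape_eq i 0 (by simp only [abs_zero]; positivity)
  have hδ : M.δ c₁.q z₁[c₁.ipos]? (fun i => c₁.tape i (c₁.hd i)) =
      M.δ c₂.q z₂[c₂.ipos]? (fun i => c₂.tape i (c₂.hd i)) := by
    rw [hz, hread, h.q_eq, h.ipos_eq]
  unfold OnlineTM.stepCfg
  rw [if_neg hH, if_neg (h.q_eq ▸ hH)]
  dsimp only
  rw [hδ]
  refine ⟨rfl, by rw [h.ipos_eq], fun i p hp => ?_⟩
  set mv := ((M.δ c₂.q z₂[c₂.ipos]? fun i => c₂.tape i (c₂.hd i)).2.2 i).2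
  rw [add_assoc, add_assoc]
  simp only [add_eq_left]
  split_ifs
  · rfl
  · exact h.tape_eq i _ ((abs_add_le _ p).trans (by push_cast; linarith [mv.abs_offset_le]))

theorem iterate_stepCfg {z₁ z₂ : List σ} (hz : ∀ p ≥ c₁.ipos, z₁[p]? = z₂[p]?) (s : ℕ)
    (h : AgreeWithin (T + s) c₁ c₂) :
    AgreeWithin T ((M.stepCfg z₁)^[s] c₁) ((M.stepCfg z₂)^[s] c₂) := by
  induction s generalizing c₁ c₂ with
  | zero => exact h
  | succ s ih =>
    rw [Function.iterate_succ_apply, Function.iterate_succ_apply]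
    exact ih (fun p hp => hz p ((M.ipos_le_ipos_stepCfg z₁ c₁).trans hp))
      (h.stepCfg (hz _ le_rfl))

end OCfg.AgreeWithin

def OCfg.window {σ : Type} {M : OnlineTM σ} (T : ℕ) (c : OCfg M) :
    Fin (M.tapes + 1) → Fin (2 * T + 1) → M.Γ :=
  fun i j => c.tape i (c.hd i + j - T)

theorem OCfg.agreeWithin_of_window_eq {σ : Type} {M : OnlineTM σ} {T : ℕ} {c₁ c₂ : OCfg M}
    (hq : c₁.q = c₂.q) (hipos : c₁.ipos = c₂.ipos) (hw : c₁.window T = c₂.window T) :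
    c₁.AgreeWithin T c₂ := by
  refine ⟨hq, hipos, fun i p hp => ?_⟩
  rw [abs_le] at hp
  have hj : (p + T).toNat < 2 * T + 1 := by omega
  have hcell := congrFun (congrFun hw i) ⟨(p + T).toNat, hj⟩
  simp only [OCfg.window] at hcell
  rwa [show ((p + T).toNat : ℤ) = p + T by omega, add_sub_assoc, add_sub_cancel_right,
    add_sub_assoc, add_sub_cancel_right] at hcell

theorem Monotone.sub_lt_of_level_le {f : ℕ → ℕ} (hf : Monotone f) {t b : ℕ}
    (hlev : ∀ i j, i ≤ j → j ≤ b → f i = f j → j - i ≤ t) {a d : ℕ} (hab : a ≤ b)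
    (hfb : f b ≤ f a + d) : b - a < (d + 1) * (t + 1) := by
  induction d generalizing a with
  | zero =>
    have := hlev a b hab le_rfl (le_antisymm (hf hab) (by omega))
    rw [zero_add, one_mul]
    omega
  | succ d ih =>
    by_cases hconst : f b = f a
    · have := hlev a b hab le_rfl hconst.symm
      have : t + 1 ≤ (d + 1 + 1) * (t + 1) := Nat.le_mul_of_pos_left _ (by omega)
      omega
    classical
    have hex : ∃ i, f a < f i := ⟨b, lt_of_le_of_ne (hf hab) (Ne.symm hconst)⟩
    set i₀ := Nat.find hex
    have hspec : f a < f i₀ := Nat.find_spec hex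
    have hi₀b : i₀ ≤ b := Nat.find_min' hex (lt_of_le_of_ne (hf hab) (Ne.symm hconst))
    have hai₀ : a < i₀ := lt_of_not_ge fun h => hspec.not_ge (hf h)
    have hprev : f a = f (i₀ - 1) :=
      le_antisymm (hf (by omega)) (not_lt.1 (Nat.find_min hex (by omega)))
    have hlevel := hlev a (i₀ - 1) (by omega) (by omega) hprev
    have hrest := ih hi₀b (by omega)
    rw [add_mul _ 1, one_mul]
    omega

section numClasses

variable {σ : Type} {L : Set (List σ)} {ℓ m : ℕ}

theorem equivalence_LEquiv :
    Equivalence fun y₁ y₂ : {y : List σ // y.length = ℓ} => LEquiv L m y₁.1 y₂.1 :=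
  ⟨fun _ _ _ => Iff.rfl, fun h x hx => (h x hx).symm,
    fun h₁ h₂ x hx => (h₁ x hx).trans (h₂ x hx)⟩

theorem numClasses_le_of_signature {S : Type} [Finite S] (sig : {y : List σ // y.length = ℓ} → S)
    (hsig : ∀ y₁ y₂, sig y₁ = sig y₂ → LEquiv L m y₁.1 y₂.1) :
    numClasses L ℓ m ≤ Nat.card S := by
  refine (Nat.card_le_card_of_surjective (fun s : Set.range sig => Quot.mk _ s.2.choose)
    ?_).trans (Finite.card_subtype_le _)
  rintro ⟨y⟩
  have hy : sig y ∈ Set.range sig := ⟨y, rfl⟩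
  exact ⟨⟨sig y, hy⟩, Quot.sound (hsig _ _ hy.choose_spec)⟩

theorem card_le_numClasses [Finite σ] {ι : Type} (y : ι → {y : List σ // y.length = ℓ})
    (hy : ∀ i j, LEquiv L m (y i).1 (y j).1 → i = j) :
    Nat.card ι ≤ numClasses L ℓ m := by
  have : Finite {y : List σ // y.length = ℓ} := (List.finite_length_eq σ ℓ).to_subtype
  exact Nat.card_le_card_of_injective (fun i => Quot.mk _ (y i)) fun i j hij =>
    hy i j (equivalence_LEquiv.eqvGen_iff.1 (Quot.eqvGen_exact hij))

end numClasses

namespace OnlineTM.DecidesIn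

variable {σ : Type} {M : OnlineTM σ} {L : Set (List σ)} {t : ℕ → ℕ}

theorem mem_F_runCfg_add_iff (hM : M.DecidesIn L t) (z : List σ) {a m : ℕ}
    (hz : z.length ≤ (M.runCfg z a).ipos + m) :
    (M.runCfg z (a + (m + 1) * (t z.length + 1))).q ∈ M.F ↔ z ∈ L := by
  obtain ⟨N, hH, -, hipos, hF, hlev⟩ := hM z
  have hN : N ≤ a + (m + 1) * (t z.length + 1) := by
    rcases le_total N a with hNa | haN
    · omega
    · have := (M.monotone_ipos_runCfg z).sub_lt_of_level_le hlev (d := m) haN (by omega)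
      omega
  rwa [M.runCfg_eq_of_mem_halt z hH hN]

theorem mem_iff_of_agreeWithin (hM : M.DecidesIn L t) {z₁ z₂ : List σ} {m a b : ℕ}
    (hlen : z₁.length = z₂.length) (hz₁ : z₁.length ≤ (M.runCfg z₁ a).ipos + m)
    (hsuf : ∀ p ≥ (M.runCfg z₁ a).ipos, z₁[p]? = z₂[p]?)
    (h : (M.runCfg z₁ a).AgreeWithin ((m + 1) * (t z₁.length + 1)) (M.runCfg z₂ b)) :
    z₁ ∈ L ↔ z₂ ∈ L := by
  have hz₂ : z₂.length ≤ (M.runCfg z₂ b).ipos + m := by rwa [← hlen, ← h.ipos_eq]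
  have hfinal := (OCfg.AgreeWithin.iterate_stepCfg hsuf _ (by rwa [zero_add])).q_eq
  rw [← hM.mem_F_runCfg_add_iff z₁ hz₁, ← hM.mem_F_runCfg_add_iff z₂ hz₂, ← hlen,
    runCfg_add, runCfg_add, hfinal]

/-- The class of a prefix `y` of length `ℓ` is determined by the state and the work-tape windows
of radius `(m + 1) * (t (ℓ + m) + 1)` when the input head first reaches position `ℓ`: the rest of
the computation takes at most that many steps. -/
theorem numClasses_le [Nonempty σ] (hM : M.DecidesIn L t) (ℓ m : ℕ) :
    numClasses L ℓ m ≤ Nat.card M.Q *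
      Nat.card M.Γ ^ ((M.tapes + 1) * (2 * ((m + 1) * (t (ℓ + m) + 1)) + 1)) := by
  have := M.finQ
  have := M.finΓ
  set T := (m + 1) * (t (ℓ + m) + 1)
  set pad := List.replicate m (Classical.arbitrary σ)
  have hfirst (y : {y : List σ // y.length = ℓ}) : ∃ a, (M.runCfg (y.1 ++ pad) a).ipos = ℓ ∧
      ∀ j < a, (M.runCfg (y.1 ++ pad) j).ipos < ℓ := by
    obtain ⟨N, -, -, hipos, -⟩ := hM (y.1 ++ pad)
    exact M.exists_first_runCfg_ipos_eq _ (N := N) (by simp [hipos, y.2, pad])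
  choose τ hτ hτmin using hfirst
  set cfg := fun y => M.runCfg (y.1 ++ pad) (τ y)
  refine (numClasses_le_of_signature (fun y => ((cfg y).q, (cfg y).window T)) ?_).trans_eq ?_
  · intro y₁ y₂ hsig x hx
    have hrun (y : {y : List σ // y.length = ℓ}) : M.runCfg (y.1 ++ x) (τ y) = cfg y :=
      (M.runCfg_eq_of_ipos_lt (by simp [hx, pad]) (fun p hp => by
        rw [List.getElem?_append_left (by omega), List.getElem?_append_left (by omega)])
        (hτmin y)).symm
    have hlen (y : {y : List σ // y.length = ℓ}) : (y.1 ++ x).length = ℓ + m := by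
      simp [y.2, hx]
    refine hM.mem_iff_of_agreeWithin (m := m) (b := τ y₂) ((hlen y₁).trans (hlen y₂).symm)
      (by rw [hrun, hτ, hlen]) (fun p hp => ?_) ?_
    · rw [hrun, hτ] at hp
      rw [List.getElem?_append_right (by omega), List.getElem?_append_right (by omega),
        y₁.2, y₂.2]
    · rw [hrun, hrun, hlen]
      exact OCfg.agreeWithin_of_window_eq (Prod.ext_iff.1 hsig).1 (by simp only [cfg, hτ])
        (Prod.ext_iff.1 hsig).2
  · simp [Nat.card_prod, Nat.card_fun, ← pow_mul, mul_comm]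

end OnlineTM.DecidesIn

section Parsing

variable {α : Type} {a : α}

theorem List.append_cons_inj_of_notMem_left {w w' r r' : List α} (hw : a ∉ w) (hw' : a ∉ w')
    (h : w ++ a :: r = w' ++ a :: r') : w = w' ∧ r = r' := by
  induction w generalizing w' with
  | nil =>
    cases w' with
    | nil => simpa using h
    | cons b' w' => exact absurd ((List.cons.inj h).1 ▸ List.mem_cons_self) hw'
  | cons b w ih =>
    cases w' with
    | nil => exact absurd ((List.cons.inj h).1 ▸ List.mem_cons_self) hw
    | cons b' w' =>
      simp only [List.cons_append, List.cons.injEq] at h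
      obtain ⟨rfl, hrest⟩ := h
      obtain ⟨rfl, rfl⟩ :=
        ih (mt (List.mem_cons_of_mem _) hw) (mt (List.mem_cons_of_mem _) hw') hrest
      exact ⟨rfl, rfl⟩

theorem List.flatten_map_append_singleton_inj {ws ws' : List (List α)} {x x' : List α}
    (hws : ∀ w ∈ ws, a ∉ w) (hws' : ∀ w ∈ ws', a ∉ w) (hx : a ∉ x) (hx' : a ∉ x')
    (h : (ws.map (· ++ [a])).flatten ++ x = (ws'.map (· ++ [a])).flatten ++ x') :
    ws = ws' ∧ x = x' := by
  induction ws generalizing ws' with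
  | nil =>
    cases ws' with
    | nil => simpa using h
    | cons w' ws' =>
      simp only [List.map_nil, List.flatten_nil, List.nil_append] at h
      exact (hx (by simp [h])).elim
  | cons w ws ih =>
    cases ws' with
    | nil =>
      simp only [List.map_nil, List.flatten_nil, List.nil_append] at h
      exact (hx' (by simp [← h])).elim
    | cons w' ws' =>
      simp only [List.map_cons, List.flatten_cons, List.append_assoc, List.cons_append,
        List.nil_append] at h
      obtain ⟨rfl, hrest⟩ :=
        List.append_cons_inj_of_notMem_left (hws w (by simp)) (hws' w' (by simp)) h
      obtain ⟨rfl, rfl⟩ :=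
        ih (fun u hu => hws u (by simp [hu])) (fun u hu => hws' u (by simp [hu])) hrest
      exact ⟨rfl, rfl⟩

end Parsing

theorem mem_LangK_iff {ws : List (List HSym)} (hws : ∀ w ∈ ws, HSym.IsBin w) (hne : ws ≠ [])
    {x : List HSym} (hx : HSym.IsBin x) :
    (ws.map (· ++ [HSym.hash])).flatten ++ x ∈ LangK ↔ x.reverse ∈ ws := by
  refine ⟨fun ⟨ws', x', _, hws', hx', heq, hmem⟩ => ?_, fun h => ⟨ws, x, hne, hws, hx, rfl, h⟩⟩
  obtain ⟨rfl, rfl⟩ := List.flatten_map_append_singleton_inj hws hws' hx hx' heq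
  exact hmem

def HSym.ofBool (b : Bool) : HSym := if b then .b1 else .b0

def encodeBits {m : ℕ} (v : Fin m → Bool) : List HSym := List.ofFn fun i => HSym.ofBool (v i)

@[simp]
theorem length_encodeBits {m : ℕ} (v : Fin m → Bool) : (encodeBits v).length = m :=
  List.length_ofFn

theorem isBin_encodeBits {m : ℕ} (v : Fin m → Bool) : HSym.IsBin (encodeBits v) := by
  simp only [HSym.IsBin, encodeBits, List.mem_ofFn, not_exists]
  intro i
  cases v i <;> simp [HSym.ofBool]

theorem encodeBits_injective {m : ℕ} : Function.Injective (encodeBits (m := m)) := by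
  intro v v' h
  funext i
  have := congrFun (List.ofFn_inj.1 h) i
  cases hv : v i <;> cases hv' : v' i <;> simp_all [HSym.ofBool]

def fillDefault {β : Type} [DecidableEq β] (v₀ : β) (g : {v // v ≠ v₀} → Bool) (v : β) : β :=
  if h : v = v₀ then v₀ else if g ⟨v, h⟩ then v else v₀

theorem exists_fillDefault_eq_iff {β : Type} [DecidableEq β] {v₀ : β}
    (g : {v // v ≠ v₀} → Bool) (u : {v // v ≠ v₀}) :
    (∃ v, fillDefault v₀ g v = u) ↔ g u = true := by
  refine ⟨fun ⟨v, hv⟩ => ?_, fun hu => ⟨u, by simp [fillDefault, u.2, hu]⟩⟩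
  unfold fillDefault at hv
  split_ifs at hv with h₁ h₂
  · exact absurd hv.symm u.2
  · exact (Subtype.ext hv : (⟨v, h₁⟩ : {v // v ≠ v₀}) = u) ▸ h₂
  · exact absurd hv.symm u.2

section Selection

variable {m : ℕ} (g : {v : Fin m → Bool // v ≠ fun _ => false} → Bool)

noncomputable def prefixOfSelection : List HSym :=
  ((Finset.univ.toList.map fun v => encodeBits (fillDefault _ g v)).map
    (· ++ [HSym.hash])).flatten

theorem length_prefixOfSelection : (prefixOfSelection g).length = 2 ^ m * (m + 1) := by
  simp [prefixOfSelection]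

theorem prefixOfSelection_append_mem_LangK_iff (u : {v : Fin m → Bool // v ≠ fun _ => false}) :
    prefixOfSelection g ++ (encodeBits u.1).reverse ∈ LangK ↔ g u = true := by
  rw [prefixOfSelection, mem_LangK_iff (by simp [isBin_encodeBits])
    (by simpa using Finset.univ_nonempty.ne_empty)
    (by simpa [HSym.IsBin] using isBin_encodeBits u.1), List.reverse_reverse]
  simp [encodeBits_injective.eq_iff, exists_fillDefault_eq_iff]

end Selection

theorem two_pow_le_numClasses_LangK (m : ℕ) :
    2 ^ (2 ^ m - 1) ≤ numClasses LangK (2 ^ m * (m + 1)) m := by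
  have hsep (g g' : {v : Fin m → Bool // v ≠ fun _ => false} → Bool)
      (h : LEquiv LangK m (prefixOfSelection g) (prefixOfSelection g')) : g = g' := by
    funext u
    have := h (encodeBits u.1).reverse (by simp)
    rwa [prefixOfSelection_append_mem_LangK_iff, prefixOfSelection_append_mem_LangK_iff,
      ← Bool.eq_iff_iff] at this
  have hcard := card_le_numClasses (L := LangK)
    (fun g => ⟨prefixOfSelection g, length_prefixOfSelection g⟩) hsep
  simpa [Nat.card_eq_fintype_card, Fintype.card_subtype_compl] using hcard

open Filter Topology in
theorem LittleOOfNOverLogSq.tendsto_div_two_pow {t : ℕ → ℕ} (ht : LittleOOfNOverLogSq t) :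
    Tendsto (fun m : ℕ => ((m + 1) * (t (2 ^ m * (m + 1) + m) + 1) : ℝ) / 2 ^ m)
      atTop (𝓝 0) := by
  set n : ℕ → ℕ := fun m => 2 ^ m * (m + 1) + m
  have hu : Tendsto (fun m => (t (n m) : ℝ) * Real.log (n m) ^ 2 / n m) atTop (𝓝 0) :=
    ht.comp (tendsto_atTop_mono (fun m => Nat.le_add_left m _) tendsto_id)
  have hgeom : Tendsto (fun m : ℕ => ((m : ℝ) + 1) / 2 ^ m) atTop (𝓝 0) := by
    simpa [add_div] using (tendsto_pow_const_div_const_pow_of_one_lt 1 one_lt_two).add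
      (tendsto_inv_atTop_zero.comp (tendsto_pow_atTop_atTop_of_one_lt one_lt_two))
  refine squeeze_zero' (Eventually.of_forall fun m => by positivity)
    ?_ (by simpa using hgeom.add (hu.const_mul (6 / Real.log 2 ^ 2)))
  filter_upwards [eventually_ge_atTop 1] with m hm
  have hm : (1 : ℝ) ≤ m := by exact_mod_cast hm
  have hn_le : (n m : ℝ) ≤ (m + 2) * 2 ^ m := by
    have : m ≤ 2 ^ m := Nat.lt_two_pow_self.le
    exact_mod_cast (by simp only [n]; nlinarith : n m ≤ (m + 2) * 2 ^ m)
  have hlog : m * Real.log 2 ≤ Real.log (n m) := by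
    rw [← Real.log_pow]
    exact Real.log_le_log (by positivity) (by exact_mod_cast
      (Nat.le_add_right_of_le (Nat.le_mul_of_pos_right _ m.succ_pos) : 2 ^ m ≤ n m))
  have key : ((m : ℝ) + 1) * t (n m) / 2 ^ m ≤
      6 / Real.log 2 ^ 2 * (t (n m) * Real.log (n m) ^ 2 / n m) := by
    rw [div_le_iff₀ (by positivity), mul_div_assoc', div_mul_eq_mul_div,
      le_div_iff₀ (by positivity), div_mul_eq_mul_div, div_mul_eq_mul_div,
      le_div_iff₀ (by positivity)]
    calc (m + 1) * t (n m) * n m * Real.log 2 ^ 2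
        ≤ (m + 1) * t (n m) * ((m + 2) * 2 ^ m) * Real.log 2 ^ 2 := by gcongr
      _ ≤ 6 * (t (n m) * (m * Real.log 2) ^ 2) * 2 ^ m := by
        have : ((m : ℝ) + 1) * (m + 2) ≤ 6 * m ^ 2 := by nlinarith
        have := mul_le_mul_of_nonneg_right this
          (by positivity : (0 : ℝ) ≤ t (n m) * Real.log 2 ^ 2 * 2 ^ m)
        linarith
      _ ≤ 6 * (t (n m) * Real.log (n m) ^ 2) * 2 ^ m := by gcongr
  calc ((m + 1) * (t (n m) + 1) : ℝ) / 2 ^ m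
      = (m + 1) / 2 ^ m + (m + 1) * t (n m) / 2 ^ m := by ring
    _ ≤ _ := by gcongr

theorem LittleOOfNOverLogSq.exists_mul_lt_two_pow {t : ℕ → ℕ} (ht : LittleOOfNOverLogSq t)
    (c : ℕ) : ∃ m : ℕ, c * ((m + 1) * (t (2 ^ m * (m + 1) + m) + 1)) < 2 ^ m := by
  obtain ⟨m, hm⟩ := (ht.tendsto_div_two_pow.eventually
    (gt_mem_nhds (show (0 : ℝ) < 1 / (c + 1) by positivity))).exists
  refine ⟨m, lt_of_le_of_lt (Nat.mul_le_mul_right _ c.le_succ) ?_⟩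
  rw [div_lt_div_iff₀ (by positivity) (by positivity)] at hm
  exact_mod_cast
    (by linarith : ((c + 1) * ((m + 1) * (t (2 ^ m * (m + 1) + m) + 1)) : ℝ) < 2 ^ m)

theorem mul_pow_lt_two_pow_sub_one {q g k T m : ℕ} (hT : 0 < T)
    (h : 8 * (q + g * k + 1) * T < 2 ^ m) : q * g ^ (k * (2 * T + 1)) < 2 ^ (2 ^ m - 1) := by
  have hexp : q + g * (k * (2 * T + 1)) ≤ 3 * ((q + g * k + 1) * T) := by
    nlinarith [Nat.le_mul_of_pos_right q hT, Nat.le_mul_of_pos_right (g * k) hT]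
  have hpos : 0 < (q + g * k + 1) * T := by positivity
  rw [mul_assoc] at h
  calc q * g ^ (k * (2 * T + 1)) ≤ 2 ^ q * (2 ^ g) ^ (k * (2 * T + 1)) :=
        Nat.mul_le_mul Nat.lt_two_pow_self.le (Nat.pow_le_pow_left Nat.lt_two_pow_self.le _)
    _ = 2 ^ (q + g * (k * (2 * T + 1))) := by rw [← pow_mul, ← pow_add]
    _ < 2 ^ (2 ^ m - 1) := Nat.pow_lt_pow_right one_lt_two (by omega)

/-- For every `t : ℕ → ℕ` with `t(n) = o(n/(log n)²)`,
the language `K` over `{0,1,#}` is not in `Online(t(n))`. -/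
theorem K_not_online (t : ℕ → ℕ) (ht : LittleOOfNOverLogSq t) :
    LangK ∉ OnlineClass HSym t := by
  rintro ⟨M, hM⟩
  have : Nonempty HSym := ⟨.b0⟩
  obtain ⟨m, hm⟩ :=
    ht.exists_mul_lt_two_pow (8 * (Nat.card M.Q + Nat.card M.Γ * (M.tapes + 1) + 1))
  have hcount := (two_pow_le_numClasses_LangK m).trans (hM.numClasses_le _ m)
  exact hcount.not_gt (mul_pow_lt_two_pow_sub_one (by positivity) hm)
end
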